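/- arXiv:2309.13764 — 2 statements merged into one kernel-verified Lean document; each statement's English description precedes it below -/
import Mathlib

section
/- With the same setup (H, H_J, ideal I as above), the natural ring map A^H/(I ∩ A^H) → A^{H_J}/(I ∩ A^{H_J}) induced by the inclusion A^H ⊆ A^{H_J} is a ring isomorphism. -/
open MvPolynomial

/-- The rescaling automorphism of `ℂ[z_1, …, z_{n-1}]` sending `z_i ↦ ω^{a_i} z_i`. -/
noncomputable def rescale4 (n : ℕ) (ω : ℂ) (a : Fin (n - 1) → ℤ) :
    MvPolynomial (Fin (n - 1)) ℂ →ₐ[ℂ] MvPolynomial (Fin (n - 1)) ℂ :=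
  aeval (fun i => (ω ^ a i) • (X i : MvPolynomial (Fin (n - 1)) ℂ))

/-- Exponent tuples defining elements of `H`: `Σ r·a_r ≡ 0 mod n`. -/
def Hcond (n : ℕ) (a : Fin (n - 1) → ℤ) : Prop :=
  (n : ℤ) ∣ ∑ i : Fin (n - 1), (((i : ℕ) : ℤ) + 1) * a i

/-- Exponent tuples defining elements of `H_J`. -/
def HJcond (n : ℕ) (J : Finset (Fin (n - 1))) (a : Fin (n - 1) → ℤ) : Prop :=
  Hcond n a ∧ ∀ j ∈ J, (n : ℤ) ∣ a j

/-- The invariant subring `A^H`. -/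
noncomputable def subH (n : ℕ) (ω : ℂ) : Subring (MvPolynomial (Fin (n - 1)) ℂ) where
  carrier := {p | ∀ a : Fin (n - 1) → ℤ, Hcond n a → rescale4 n ω a p = p}
  mul_mem' := by intro p q hp hq a ha; rw [map_mul, hp a ha, hq a ha]
  add_mem' := by intro p q hp hq a ha; rw [map_add, hp a ha, hq a ha]
  one_mem' := by intro a ha; rw [map_one]
  zero_mem' := by intro a ha; rw [map_zero]
  neg_mem' := by intro p hp a ha; rw [map_neg, hp a ha]

/-- The invariant subring `A^{H_J}`. -/
noncomputable def subHJ (n : ℕ) (ω : ℂ) (J : Finset (Fin (n - 1))) :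
    Subring (MvPolynomial (Fin (n - 1)) ℂ) where
  carrier := {p | ∀ a : Fin (n - 1) → ℤ, HJcond n J a → rescale4 n ω a p = p}
  mul_mem' := by intro p q hp hq a ha; rw [map_mul, hp a ha, hq a ha]
  add_mem' := by intro p q hp hq a ha; rw [map_add, hp a ha, hq a ha]
  one_mem' := by intro a ha; rw [map_one]
  zero_mem' := by intro a ha; rw [map_zero]
  neg_mem' := by intro p hp a ha; rw [map_neg, hp a ha]

theorem subH_le_subHJ (n : ℕ) (ω : ℂ) (J : Finset (Fin (n - 1))) :
    subH n ω ≤ subHJ n ω J := fun _ hp a ha => hp a ha.1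

/-- The ideal `I = ⟨z_j − ω^{c_j} (j ∈ J), z_k (k ∈ K)⟩`. -/
noncomputable def idealI (n : ℕ) (ω : ℂ) (J K : Finset (Fin (n - 1)))
    (c : Fin (n - 1) → ℕ) : Ideal (MvPolynomial (Fin (n - 1)) ℂ) :=
  Ideal.span ((fun j => (X j : MvPolynomial (Fin (n - 1)) ℂ) - C (ω ^ c j)) '' (J : Set _)
    ∪ (fun k => (X k : MvPolynomial (Fin (n - 1)) ℂ)) '' (K : Set _))

/-!
An element of `A^{H_J}` is a sum of `H_J`-invariant monomials `z^d`. Invariance says that the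
character `a ↦ Σ aᵢ dᵢ mod n` vanishes on `H_J`; by a Bezout argument in `ℤ`, this forces
`dᵢ ≡ λ (i + 1) mod n` for all `i ∉ J` and some `λ`. Raising the exponents `dⱼ`, `j ∈ J`, to
values `≡ λ (j + 1)` gives an `H`-invariant monomial, and modulo `I` this only changes `z^d` by a
nonzero scalar, because `zⱼ ≡ ω^{cⱼ}` there.
-/

open Matrix

theorem Int.exists_dvd_sub_mul_of_forall_dvd_dotProduct {ι : Type*} [Fintype ι] [DecidableEq ι]
    {n : ℤ} (hn : n ≠ 0) {v d : ι → ℤ} (h : ∀ a, n ∣ v ⬝ᵥ a → n ∣ d ⬝ᵥ a) :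
    ∃ l : ℤ, ∀ i, n ∣ d i - l * v i := by
  -- `g = gcd (n, v)`, written as `A n + μ ⬝ᵥ v`
  obtain ⟨g, hg⟩ : ∃ g : ℤ, Ideal.span (insert n (Set.range v)) = Ideal.span {g} :=
    ⟨_, (Submodule.IsPrincipal.span_singleton_generator _).symm⟩
  have hg_dvd : ∀ x ∈ insert n (Set.range v), g ∣ x := fun x hx =>
    Ideal.mem_span_singleton.1 (hg ▸ Ideal.subset_span hx)
  obtain ⟨A, z, hz, hgAz⟩ := Ideal.mem_span_insert.1 (hg ▸ Ideal.mem_span_singleton_self g)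
  obtain ⟨μ, rfl⟩ := (Ideal.mem_span_range_iff_exists_fun).1 hz
  obtain ⟨m, rfl⟩ := hg_dvd n (Set.mem_insert _ _)
  have hm : m ≠ 0 := right_ne_zero_of_mul hn
  have hvμ : v ⬝ᵥ μ = g - A * (g * m) := by
    rw [dotProduct_comm]; exact eq_sub_of_add_eq' hgAz.symm
  obtain ⟨l, hl⟩ : g ∣ d ⬝ᵥ μ := by
    have h' := h (m • μ) ⟨1 - A * m, by rw [dotProduct_smul, hvμ, smul_eq_mul]; ring⟩
    rw [dotProduct_smul, smul_eq_mul, mul_comm m] at h'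
    exact (mul_dvd_mul_iff_right hm).1 h'
  refine ⟨l, fun i => ?_⟩
  obtain ⟨k, hk⟩ := hg_dvd (v i) (Set.mem_insert_of_mem _ ⟨i, rfl⟩)
  have h' := h (k • μ - Pi.single i 1) ⟨-(k * A), by
    rw [dotProduct_sub, dotProduct_smul, dotProduct_single, hvμ, hk, smul_eq_mul]; ring⟩
  rw [dotProduct_sub, dotProduct_smul, dotProduct_single, hl, smul_eq_mul, mul_one] at h'
  rwa [← dvd_neg, show -(d i - l * v i) = k * (g * l) - d i by rw [hk]; ring]

theorem Int.exists_dvd_sub_mul_off_of_forall_dvd_dotProduct {ι : Type*} [Fintype ι]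
    [DecidableEq ι] {n : ℤ} (hn : n ≠ 0) (J : Finset ι) {v d : ι → ℤ}
    (h : ∀ a, n ∣ v ⬝ᵥ a → (∀ j ∈ J, n ∣ a j) → n ∣ d ⬝ᵥ a) :
    ∃ l : ℤ, ∀ i ∉ J, n ∣ d i - l * v i := by
  have off_J : ∀ w a : ι → ℤ, (fun i => if i ∈ J then 0 else w i) ⬝ᵥ a
      = w ⬝ᵥ fun i => if i ∈ J then 0 else a i := fun w a => by
    simp [dotProduct, ite_mul, mul_ite]
  obtain ⟨l, hl⟩ := Int.exists_dvd_sub_mul_of_forall_dvd_dotProduct hn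
    (v := fun i => if i ∈ J then 0 else v i) (d := fun i => if i ∈ J then 0 else d i)
    fun a ha => by
      rw [off_J] at ha ⊢
      exact h _ ha fun j hj => by simp [hj]
  exact ⟨l, fun i hi => by simpa [hi] using hl i⟩

theorem zpow_sum₀ {ι G₀ : Type*} [CommGroupWithZero G₀] {a : G₀} (ha : a ≠ 0) (s : Finset ι)
    (f : ι → ℤ) : a ^ (∑ i ∈ s, f i) = ∏ i ∈ s, a ^ f i := by
  classical
  induction s using Finset.induction_on with
  | empty => simp
  | insert i s hi ih => rw [Finset.sum_insert hi, Finset.prod_insert hi, zpow_add₀ ha, ih]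

/-- Variable `i : Fin (n - 1)` is `z_{i+1}`, of weight `i + 1` in the congruence of `H`. -/
def weight (n : ℕ) : Fin (n - 1) → ℤ := fun i => ((i : ℕ) : ℤ) + 1

section Rescale

variable {n : ℕ} {ω : ℂ}

theorem rescale4_monomial (hω : ω ≠ 0) (a : Fin (n - 1) → ℤ) (d : Fin (n - 1) →₀ ℕ) (r : ℂ) :
    rescale4 n ω a (monomial d r) = ω ^ (a ⬝ᵥ fun i => (d i : ℤ)) • monomial d r := by
  rw [rescale4, aeval_monomial, Finsupp.prod_fintype _ _ fun i => pow_zero _, monomial_eq,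
    Finsupp.prod_fintype _ _ fun i => pow_zero _, dotProduct, zpow_sum₀ hω]
  simp only [smul_eq_C_mul, mul_pow, algebraMap_eq, _root_.zpow_mul, zpow_natCast, C_pow, map_prod,
    Finset.prod_mul_distrib]
  ring

theorem coeff_rescale4 (hω : ω ≠ 0) (a : Fin (n - 1) → ℤ) (d : Fin (n - 1) →₀ ℕ)
    (p : MvPolynomial (Fin (n - 1)) ℂ) :
    coeff d (rescale4 n ω a p) = ω ^ (a ⬝ᵥ fun i => (d i : ℤ)) * coeff d p := by
  induction p using MvPolynomial.induction_on' with
  | monomial e r =>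
    rw [rescale4_monomial hω, coeff_smul, coeff_monomial, smul_eq_mul]
    split_ifs with h
    · rw [h]
    · simp
  | add p q hp hq => rw [map_add, coeff_add, coeff_add, hp, hq, mul_add]

variable (hn : n ≠ 0) (hω : IsPrimitiveRoot ω n)
include hn hω

theorem dvd_dotProduct_of_mem_subHJ {J : Finset (Fin (n - 1))} {p : MvPolynomial (Fin (n - 1)) ℂ}
    (hp : p ∈ subHJ n ω J) {d : Fin (n - 1) →₀ ℕ} (hd : d ∈ p.support) {a : Fin (n - 1) → ℤ}
    (ha : HJcond n J a) : (n : ℤ) ∣ a ⬝ᵥ fun i => (d i : ℤ) := by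
  have h := congrArg (coeff d) (hp a ha)
  rw [coeff_rescale4 (hω.ne_zero hn)] at h
  exact (hω.zpow_eq_one_iff_dvd _).1 ((mul_eq_right₀ (mem_support_iff.1 hd)).1 h)

theorem monomial_mem_subH {d : Fin (n - 1) →₀ ℕ} {l : ℤ}
    (hd : ∀ i, (n : ℤ) ∣ d i - l * weight n i) (r : ℂ) : monomial d r ∈ subH n ω := by
  intro a ha
  have hdiff : (n : ℤ) ∣ a ⬝ᵥ fun i => (d i : ℤ) - l * weight n i :=
    Finset.dvd_sum fun i _ => (hd i).mul_left _
  have hdvd : (n : ℤ) ∣ a ⬝ᵥ fun i => (d i : ℤ) := by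
    have hsplit : (a ⬝ᵥ fun i => (d i : ℤ))
        = (a ⬝ᵥ fun i => (d i : ℤ) - l * weight n i) + l * (weight n ⬝ᵥ a) := by
      simp only [dotProduct, Finset.mul_sum, ← Finset.sum_add_distrib]
      exact Finset.sum_congr rfl fun i _ => by ring
    rw [hsplit]
    exact dvd_add hdiff (ha.mul_left l)
  rw [rescale4_monomial (hω.ne_zero hn), (hω.zpow_eq_one_iff_dvd _).2 hdvd, one_smul]

end Rescale

theorem Ideal.Quotient.mk_monomial_one_eq_of_X_sub_C_mem {σ R : Type*} [CommRing R]
    {I : Ideal (MvPolynomial σ R)} {s : σ → R} {k : σ →₀ ℕ}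
    (hk : ∀ i ∈ k.support, X i - C (s i) ∈ I) :
    Ideal.Quotient.mk I (monomial k 1) = Ideal.Quotient.mk I (C (k.prod fun i e => s i ^ e)) := by
  rw [monomial_eq, C_1, one_mul, Finsupp.prod, Finsupp.prod, map_prod, map_prod, map_prod]
  refine Finset.prod_congr rfl fun i hi => ?_
  rw [map_pow, C_pow, map_pow, Ideal.Quotient.eq.2 (hk i hi)]

theorem X_sub_C_mem_idealI (n : ℕ) (ω : ℂ) {J : Finset (Fin (n - 1))} (K : Finset (Fin (n - 1)))
    (c : Fin (n - 1) → ℕ) {j : Fin (n - 1)} (hj : j ∈ J) :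
    X j - C (ω ^ c j) ∈ idealI n ω J K c :=
  Ideal.subset_span (Or.inl ⟨j, hj, rfl⟩)

section Reduction

variable {n : ℕ} (hn : n ≠ 0) {ω : ℂ} (hω : IsPrimitiveRoot ω n)
  {J : Finset (Fin (n - 1))} (K : Finset (Fin (n - 1))) (c : Fin (n - 1) → ℕ)
include hn hω

theorem exists_mem_subH_monomial_sub_mem_idealI {d : Fin (n - 1) →₀ ℕ}
    (hd : ∀ a, HJcond n J a → (n : ℤ) ∣ a ⬝ᵥ fun i => (d i : ℤ)) (r : ℂ) :
    ∃ q ∈ subH n ω, monomial d r - q ∈ idealI n ω J K c := by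
  have hn' : (n : ℤ) ≠ 0 := Nat.cast_ne_zero.2 hn
  obtain ⟨l, hl⟩ := Int.exists_dvd_sub_mul_off_of_forall_dvd_dotProduct hn' J (v := weight n)
    (d := fun i => (d i : ℤ)) fun a ha haJ => by
      rw [dotProduct_comm]; exact hd a ⟨ha, haJ⟩
  -- raise the exponents in `J` to the residues `l * weight n j mod n`
  let e : Fin (n - 1) →₀ ℕ := Finsupp.equivFunOnFinite.symm fun j =>
    if j ∈ J then ((l * weight n j - d j) % n).toNat else 0
  have hde : ∀ i, (n : ℤ) ∣ (d + e) i - l * weight n i := by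
    intro i
    by_cases hi : i ∈ J
    · have he : (e i : ℤ) = (l * weight n i - d i) % n := by
        simp [e, hi, Int.emod_nonneg _ hn']
      rw [Finsupp.add_apply, Nat.cast_add, he, Int.emod_def]
      exact ⟨-((l * weight n i - d i) / n), by ring⟩
    · simpa [e, hi] using hl i hi
  have he_J : ∀ i ∈ e.support, X i - C (ω ^ c i) ∈ idealI n ω J K c := by
    intro i hi
    refine X_sub_C_mem_idealI n ω K c (not_not.1 fun hiJ => Finsupp.mem_support_iff.1 hi ?_)
    simp [e, hiJ]
  set t := e.prod fun i k => (ω ^ c i) ^ k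
  have ht : t ≠ 0 := Finset.prod_ne_zero_iff.2 fun i _ => pow_ne_zero _ (pow_ne_zero _
    (hω.ne_zero hn))
  refine ⟨monomial (d + e) (t⁻¹ * r), monomial_mem_subH hn hω hde _, ?_⟩
  have hq : monomial (d + e) (t⁻¹ * r) = C t⁻¹ * monomial d r * monomial e 1 := by
    rw [mul_assoc, monomial_mul, mul_one, C_mul_monomial]
  rw [← Ideal.Quotient.eq, hq, map_mul, map_mul,
    Ideal.Quotient.mk_monomial_one_eq_of_X_sub_C_mem he_J, mul_right_comm, ← map_mul, ← C_mul,
    inv_mul_cancel₀ ht, C_1, map_one, one_mul]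

theorem exists_mem_subH_sub_mem_idealI {p : MvPolynomial (Fin (n - 1)) ℂ}
    (hp : p ∈ subHJ n ω J) : ∃ q ∈ subH n ω, p - q ∈ idealI n ω J K c := by
  rw [p.as_sum]
  refine Finset.sum_induction _ (fun x => ∃ q ∈ subH n ω, x - q ∈ idealI n ω J K c)
    (fun x y ⟨q, hq, hxq⟩ ⟨q', hq', hyq⟩ => ⟨q + q', add_mem hq hq', ?_⟩)
    ⟨0, zero_mem _, by simp⟩
    fun d hd => exists_mem_subH_monomial_sub_mem_idealI hn hω K c
      (fun a ha => dvd_dotProduct_of_mem_subHJ hn hω hp hd ha) _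
  rw [add_sub_add_comm]
  exact add_mem hxq hyq

end Reduction

theorem stmt4_general (n : ℕ) (hn : 2 ≤ n) (ω : ℂ) (hω : IsPrimitiveRoot ω n)
    (J K : Finset (Fin (n - 1)))
    (c : Fin (n - 1) → ℕ) :
    RingHom.ker ((Ideal.Quotient.mk ((idealI n ω J K c).comap (subHJ n ω J).subtype)).comp
        (Subring.inclusion (subH_le_subHJ n ω J)))
      = (idealI n ω J K c).comap (subH n ω).subtype ∧
    Function.Surjective
      ((Ideal.Quotient.mk ((idealI n ω J K c).comap (subHJ n ω J).subtype)).comp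
        (Subring.inclusion (subH_le_subHJ n ω J))) := by
  refine ⟨?_, fun y => ?_⟩
  · ext x
    simp only [RingHom.mem_ker, RingHom.comp_apply, Ideal.Quotient.eq_zero_iff_mem,
      Ideal.mem_comap]
    rfl
  · obtain ⟨⟨p, hp⟩, rfl⟩ := Ideal.Quotient.mk_surjective y
    obtain ⟨q, hq, hpq⟩ := exists_mem_subH_sub_mem_idealI (by omega) hω K c hp
    refine ⟨⟨q, hq⟩, Ideal.Quotient.eq.2 ?_⟩
    rw [Ideal.mem_comap, ← neg_mem_iff]
    simpa using hpq

/-- The natural ring map `A^H/(I ∩ A^H) → A^{H_J}/(I ∩ A^{H_J})` induced by the inclusion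
`A^H ⊆ A^{H_J}` is a ring isomorphism: the composite `A^H → A^{H_J}/(I ∩ A^{H_J})` has
kernel `I ∩ A^H` and is surjective. -/
theorem stmt4 (n : ℕ) (hn : 2 ≤ n) (ω : ℂ) (hω : IsPrimitiveRoot ω n)
    (J K : Finset (Fin (n - 1))) (hJK : Disjoint J K)
    (c : Fin (n - 1) → ℕ) (hc : ∀ j, c j ≤ n - 1) :
    RingHom.ker ((Ideal.Quotient.mk ((idealI n ω J K c).comap (subHJ n ω J).subtype)).comp
        (Subring.inclusion (subH_le_subHJ n ω J)))
      = (idealI n ω J K c).comap (subH n ω).subtype ∧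
    Function.Surjective
      ((Ideal.Quotient.mk ((idealI n ω J K c).comap (subHJ n ω J).subtype)).comp
        (Subring.inclusion (subH_le_subHJ n ω J))) :=
  stmt4_general n hn ω hω J K c
end

section
/- Let σ be a row-strict tableau of shape λ ⊢ n and d a divisor of σ. Then |inv(σ)| = D_{λ,d} + |inv(σ/d)|, where D_{λ,d} = ((d−1)/d)·Σ_i (i−1)λ_i. -/
open scoped Classical

/-- The set of boxes (row, column), 0-indexed, of the Young diagram of a partition given
as a list of row lengths. -/
def cells (L : List ℕ) : Set (ℕ × ℕ) := {p | p.1 < L.length ∧ p.2 < L.getD p.1 0}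

/-- `pos` encodes a tableau of shape `L` with entries `1, …, n`:  `pos i` is the (row,
column) of the box labeled `i`.  It is injective on `{1,…,n}` with image the set of
boxes, and is normalized to `(0,0)` outside `{1,…,n}`. -/
def IsTab (L : List ℕ) (n : ℕ) (pos : ℕ → ℕ × ℕ) : Prop :=
  Set.InjOn pos (Set.Icc 1 n) ∧ pos '' Set.Icc 1 n = cells L ∧
    ∀ i, i ∉ Set.Icc 1 n → pos i = (0, 0)

/-- Row-strictness: entries increase along each row (left to right). -/
def RowStrict (n : ℕ) (pos : ℕ → ℕ × ℕ) : Prop :=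
  ∀ i j, i ∈ Set.Icc 1 n → j ∈ Set.Icc 1 n →
    (pos j).1 = (pos i).1 → (pos j).2 = (pos i).2 + 1 → i < j

/-- A row-strict tableau of shape `L` with entries `1, …, n`. -/
def IsRST (L : List ℕ) (n : ℕ) (pos : ℕ → ℕ × ℕ) : Prop :=
  IsTab L n pos ∧ RowStrict n pos

/-- `(i, j)` with `i > j` is a Springer pair: `i` lies in the same column as `j` or in a
column strictly to its left, and if the box directly right of `j` is labeled `r` then
`i < r`. -/
def SpringerPair (n : ℕ) (pos : ℕ → ℕ × ℕ) (i j : ℕ) : Prop :=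
  1 ≤ j ∧ j < i ∧ i ≤ n ∧ (pos i).2 ≤ (pos j).2 ∧
    ∀ r ∈ Set.Icc 1 n, pos r = ((pos j).1, (pos j).2 + 1) → i < r

/-- A Springer inversion is a Springer pair `(i, j)` such that if `i` is in the same
column as `j` then `i` lies strictly below `j`. -/
def SpringerInv (n : ℕ) (pos : ℕ → ℕ × ℕ) (i j : ℕ) : Prop :=
  SpringerPair n pos i j ∧ ((pos i).2 = (pos j).2 → (pos j).1 < (pos i).1)

/-- The number of Springer pairs of a tableau. -/
noncomputable def pairsCount (n : ℕ) (pos : ℕ → ℕ × ℕ) : ℕ :=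
  {p : ℕ × ℕ | SpringerPair n pos p.1 p.2}.ncard

/-- The number of Springer inversions of a tableau. -/
noncomputable def invCount (n : ℕ) (pos : ℕ → ℕ × ℕ) : ℕ :=
  {p : ℕ × ℕ | SpringerInv n pos p.1 p.2}.ncard

/-- `d` is a divisor of the tableau: `d ∣ n` and the tableau decomposes into blocks of
`d` consecutive boxes with consecutive labels, i.e. whenever `d ∤ i` the box labeled
`i + 1` is directly to the right of the box labeled `i`. -/
def TabDivisor (n d : ℕ) (pos : ℕ → ℕ × ℕ) : Prop :=
  d ∣ n ∧ ∀ i, 1 ≤ i → i < n → ¬ d ∣ i → pos (i + 1) = ((pos i).1, (pos i).2 + 1)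

/-- The quotient tableau `σ/d`: each block of `d` boxes is merged into a single box,
labeled in the same relative order (the block containing `d·m` gets label `m`). -/
def quotTab (d : ℕ) (pos : ℕ → ℕ × ℕ) : ℕ → ℕ × ℕ :=
  fun m => ((pos (d * m)).1, ((pos (d * m)).2 + 1) / d - 1)

/-- `Σ_i (i−1)·λ_i`, the dimension of the Springer fiber of Jordan type `λ`. -/
def dimB (L : List ℕ) : ℕ := ∑ i ∈ Finset.range L.length, i * L.getD i 0

/-- `L` is a partition of `n`: weakly decreasing positive parts summing to `n`. -/
def IsPartition (L : List ℕ) (n : ℕ) : Prop :=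
  L.sum = n ∧ L.Pairwise (· ≥ ·) ∧ ∀ x ∈ L, 0 < x

/-!
A Springer pair `(i, j)` that is not an inversion has `i` in the column of `j`, weakly above
it. For a row-strict tableau of shape `λ` the Springer pairs are counted by `Σ_i (i-1) λ_i`:
for each label `a` and each row having a box with a smaller label `b` in the column of `a`,
there is exactly one `j` in that row with `(a, j)` a Springer pair (the largest label of the
row smaller than `a`), so the pairs correspond to the pairs of boxes in a common column.

A divisor `d` cuts the labels into blocks `d q + 1, …, d q + d`, each filling the boxes
`d k, …, d k + d - 1` of one row, and `σ/d` collapses every block to one box; it is again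
row-strict, of shape `λ/d`. A non-inversion joins two block ends, and `(i, j) ↦ (i/d, j/d)`
matches the non-inversions of `σ` with those of `σ/d`. Subtracting the pair counts of `σ` and
`σ/d` gives the identity.
-/

open Set

section Tableau

variable {L : List ℕ} {n : ℕ} {σ : ℕ → ℕ × ℕ}

lemma mem_cells_of_col_le {p : ℕ × ℕ} (hp : p ∈ cells L) {c : ℕ} (hc : c ≤ p.2) :
    (p.1, c) ∈ cells L :=
  ⟨hp.1, hc.trans_lt hp.2⟩

lemma mem_cells_of_row_le (hL : L.Pairwise (· ≥ ·)) {r c r' : ℕ} (hp : (r, c) ∈ cells L)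
    (hr : r' ≤ r) : (r', c) ∈ cells L := by
  obtain ⟨hrL, hc⟩ := hp
  refine ⟨hr.trans_lt hrL, hc.trans_le ?_⟩
  rcases hr.eq_or_lt with rfl | hlt
  · rfl
  · rw [List.getD_eq_getElem _ _ hrL, List.getD_eq_getElem _ _ (hlt.trans hrL)]
    exact hL.rel_get_of_lt (a := ⟨r', hlt.trans hrL⟩) (b := ⟨r, hrL⟩) hlt

lemma IsTab.pos_mem_cells (hσ : IsTab L n σ) {i : ℕ} (hi : i ∈ Icc 1 n) : σ i ∈ cells L :=
  hσ.2.1 ▸ mem_image_of_mem σ hi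

lemma IsTab.exists_pos_eq (hσ : IsTab L n σ) {p : ℕ × ℕ} (hp : p ∈ cells L) :
    ∃ i ∈ Icc 1 n, σ i = p := by
  rwa [← hσ.2.1] at hp

lemma IsRST.lt_of_col_lt (hσ : IsRST L n σ) {a b : ℕ} (ha : a ∈ Icc 1 n) (hb : b ∈ Icc 1 n)
    (hrow : (σ a).1 = (σ b).1) (hcol : (σ a).2 < (σ b).2) : a < b := by
  obtain ⟨k, hk⟩ := Nat.exists_eq_add_of_lt hcol
  induction k generalizing b with
  | zero => exact hσ.2 a b ha hb hrow.symm hk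
  | succ k ih =>
    obtain ⟨x, hx, hσx⟩ := hσ.1.exists_pos_eq
      (mem_cells_of_col_le (hσ.1.pos_mem_cells hb) (c := (σ a).2 + k + 1) (by omega))
    have hax : a < x := ih hx (by rw [hσx, hrow]) (by rw [hσx]; omega) (by rw [hσx])
    have hxb : x < b := hσ.2 x b hx hb (by rw [hσx]) (by rw [hσx]; omega)
    exact hax.trans hxb

lemma IsRST.lt_iff_col_lt (hσ : IsRST L n σ) {a b : ℕ} (ha : a ∈ Icc 1 n) (hb : b ∈ Icc 1 n)
    (hrow : (σ a).1 = (σ b).1) : a < b ↔ (σ a).2 < (σ b).2 := by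
  refine ⟨fun hab => ?_, hσ.lt_of_col_lt ha hb hrow⟩
  rcases lt_trichotomy (σ a).2 (σ b).2 with h | h | h
  · exact h
  · exact absurd (hσ.1.1 ha hb (Prod.ext hrow h)) hab.ne
  · exact absurd (hσ.lt_of_col_lt hb ha hrow.symm h) hab.not_gt

end Tableau

section PairsCount

variable {L : List ℕ} {n : ℕ} {σ : ℕ → ℕ × ℕ}

def colPairsByLabel (n : ℕ) (σ : ℕ → ℕ × ℕ) : Set (ℕ × ℕ × ℕ) :=
  {x | ∃ a ∈ Icc 1 n, ∃ b ∈ Icc 1 n,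
    σ a = (x.1, x.2.1) ∧ σ b = (x.2.2, x.2.1) ∧ b < a}

def colPairsByRow (L : List ℕ) : Set (ℕ × ℕ × ℕ) :=
  {x | (x.1, x.2.1) ∈ cells L ∧ x.2.2 < x.1}

lemma SpringerPair.fst_mem_Icc {i j : ℕ} (h : SpringerPair n σ i j) : i ∈ Icc 1 n :=
  ⟨by have := h.1; have := h.2.1; omega, h.2.2.1⟩

lemma SpringerPair.snd_mem_Icc {i j : ℕ} (h : SpringerPair n σ i j) : j ∈ Icc 1 n :=
  ⟨h.1, by have := h.2.1; have := h.2.2.1; omega⟩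

lemma SpringerPair.eq_of_row_eq (hσ : IsRST L n σ) {i j j' : ℕ} (h : SpringerPair n σ i j)
    (h' : SpringerPair n σ i j') (hrow : (σ j).1 = (σ j').1) : j = j' := by
  wlog hlt : j < j' generalizing j j'
  · rcases (not_lt.1 hlt).eq_or_lt with heq | hgt
    · exact heq.symm
    · exact (this h' h hrow.symm hgt).symm
  obtain ⟨hj1, hji, -, -, hright⟩ := h
  obtain ⟨-, hj'i, hin, -, -⟩ := h'
  have hj : j ∈ Icc 1 n := ⟨hj1, by omega⟩
  have hj' : j' ∈ Icc 1 n := ⟨by omega, by omega⟩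
  have hcol := (hσ.lt_iff_col_lt hj hj' hrow).1 hlt
  obtain ⟨x, hx, hσx⟩ := hσ.1.exists_pos_eq
    (mem_cells_of_col_le (hσ.1.pos_mem_cells hj') (c := (σ j).2 + 1) hcol)
  rw [← hrow] at hσx
  have hxj' : ¬ j' < x := by
    rw [hσ.lt_iff_col_lt hj' hx (by rw [hσx, hrow]), hσx, not_lt]
    exact hcol
  have := hright x hx hσx
  omega

lemma IsRST.exists_springerPair (hσ : IsRST L n σ) {a b r₁ r₂ c : ℕ} (ha : a ∈ Icc 1 n)
    (hb : b ∈ Icc 1 n) (hσa : σ a = (r₁, c)) (hσb : σ b = (r₂, c)) (hba : b < a) :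
    ∃ j, SpringerPair n σ a j ∧ (σ j).1 = r₂ := by
  set S := (Finset.Icc 1 n).filter fun x => (σ x).1 = r₂ ∧ x < a
  have hbS : b ∈ S := by simpa [S, hσb, hba] using hb
  set j := S.max' ⟨b, hbS⟩
  obtain ⟨hjI, hjrow, hja⟩ : j ∈ Finset.Icc 1 n ∧ (σ j).1 = r₂ ∧ j < a := by
    simpa [S] using S.max'_mem ⟨b, hbS⟩
  have hj : j ∈ Icc 1 n := by simpa using hjI
  have hr₁₂ : r₁ ≠ r₂ := by
    rintro rfl
    exact hba.ne (hσ.1.1 hb ha (hσb.trans hσa.symm))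
  refine ⟨j, ⟨hj.1, hja, ha.2, ?_, fun x hx hσx => ?_⟩, hjrow⟩
  · have hbj : ¬ j < b := not_lt.2 (S.le_max' b hbS)
    rw [hσ.lt_iff_col_lt hj hb (by rw [hjrow, hσb]), not_lt] at hbj
    calc (σ a).2 = (σ b).2 := by rw [hσa, hσb]
      _ ≤ (σ j).2 := hbj
  · have hjx : j < x := hσ.2 j x hj hx (by rw [hσx]) (by rw [hσx])
    by_contra! hxa
    rcases hxa.eq_or_lt with rfl | hxa
    · exact hr₁₂ (by rw [← hjrow, ← congrArg Prod.fst hσx, hσa])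
    · have hxS : x ∈ S := by simpa [S, hσx, hjrow, hxa] using hx
      exact (S.le_max' x hxS).not_gt hjx

lemma IsRST.springerPairs_bijOn (hσ : IsRST L n σ) :
    BijOn (fun p : ℕ × ℕ => ((σ p.1).1, (σ p.1).2, (σ p.2).1))
      {p | SpringerPair n σ p.1 p.2} (colPairsByLabel n σ) := by
  refine ⟨?_, ?_, ?_⟩
  · rintro ⟨i, j⟩ ⟨hj1, hji, hin, hcol, -⟩
    have hi : i ∈ Icc 1 n := ⟨by omega, hin⟩
    have hj : j ∈ Icc 1 n := ⟨hj1, by omega⟩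
    obtain ⟨b, hb, hσb⟩ := hσ.1.exists_pos_eq
      (mem_cells_of_col_le (hσ.1.pos_mem_cells hj) hcol)
    have hbj : ¬ j < b := by
      rw [hσ.lt_iff_col_lt hj hb (by rw [hσb]), hσb, not_lt]
      exact hcol
    exact ⟨i, hi, b, hb, rfl, hσb, by omega⟩
  · rintro ⟨i, j⟩ (h : SpringerPair n σ i j) ⟨i', j'⟩ (h' : SpringerPair n σ i' j') heq
    simp only [Prod.mk.injEq] at heq
    obtain ⟨hrow, hcol, hrowj⟩ := heq
    obtain rfl : i = i' := hσ.1.1 h.fst_mem_Icc h'.fst_mem_Icc (Prod.ext hrow hcol)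
    rw [h.eq_of_row_eq hσ h' hrowj]
  · rintro ⟨r₁, c, r₂⟩ ⟨a, ha, b, hb, hσa, hσb, hba⟩
    obtain ⟨j, hj, hjrow⟩ := hσ.exists_springerPair ha hb hσa hσb hba
    exact ⟨(a, j), hj, by simp [hσa, hjrow]⟩

lemma IsTab.mem_colPairsByLabel_or_swap (hσ : IsTab L n σ) {r₁ c r₂ : ℕ}
    (h₁ : (r₁, c) ∈ cells L) (h₂ : (r₂, c) ∈ cells L) (hne : r₁ ≠ r₂) :
    (r₁, c, r₂) ∈ colPairsByLabel n σ ∨ (r₂, c, r₁) ∈ colPairsByLabel n σ := by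
  obtain ⟨a, ha, hσa⟩ := hσ.exists_pos_eq h₁
  obtain ⟨b, hb, hσb⟩ := hσ.exists_pos_eq h₂
  rcases lt_trichotomy a b with hab | rfl | hab
  · exact Or.inr ⟨b, hb, a, ha, hσb, hσa, hab⟩
  · exact absurd (congrArg Prod.fst (hσa.symm.trans hσb)) hne
  · exact Or.inl ⟨a, ha, b, hb, hσa, hσb, hab⟩

lemma IsTab.swap_notMem_colPairsByLabel (hσ : IsTab L n σ) {r₁ c r₂ : ℕ}
    (h : (r₁, c, r₂) ∈ colPairsByLabel n σ) : (r₂, c, r₁) ∉ colPairsByLabel n σ := by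
  rintro ⟨a', ha', b', hb', hσa', hσb', hba'⟩
  obtain ⟨a, ha, b, hb, hσa, hσb, hba⟩ := h
  have hab' : a = b' := hσ.1 ha hb' (hσa.trans hσb'.symm)
  have hba' : b = a' := hσ.1 hb ha' (hσb.trans hσa'.symm)
  omega

lemma IsTab.mem_cells_of_mem_colPairsByLabel (hσ : IsTab L n σ) {r₁ c r₂ : ℕ}
    (hx : (r₁, c, r₂) ∈ colPairsByLabel n σ) :
    (r₁, c) ∈ cells L ∧ (r₂, c) ∈ cells L ∧ r₁ ≠ r₂ := by
  obtain ⟨a, ha, b, hb, hσa, hσb, hba⟩ := hx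
  refine ⟨hσa ▸ hσ.pos_mem_cells ha, hσb ▸ hσ.pos_mem_cells hb, fun h => hba.ne ?_⟩
  exact hσ.1 hb ha (by rw [hσa, hσb, h])

/-- Both sets enumerate the pairs of distinct boxes in a common column, oriented once by
labels and once by rows. -/
lemma IsTab.colPairsByLabel_bijOn (hσ : IsTab L n σ) (hL : L.Pairwise (· ≥ ·)) :
    BijOn (fun x : ℕ × ℕ × ℕ => if x.2.2 < x.1 then x else (x.2.2, x.2.1, x.1))
      (colPairsByLabel n σ) (colPairsByRow L) := by
  refine ⟨?_, ?_, ?_⟩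
  · rintro ⟨r₁, c, r₂⟩ hx
    obtain ⟨h₁, h₂, hne⟩ := hσ.mem_cells_of_mem_colPairsByLabel hx
    dsimp only
    split_ifs with hlt
    · exact ⟨h₁, hlt⟩
    · exact ⟨h₂, show r₁ < r₂ by omega⟩
  · rintro ⟨r₁, c, r₂⟩ hx ⟨r₁', c', r₂'⟩ hy heq
    dsimp only at heq
    split_ifs at heq with h h' h' <;> simp only [Prod.mk.injEq] at heq
    · rw [heq.1, heq.2.1, heq.2.2]
    · obtain ⟨rfl, rfl, rfl⟩ := heq
      exact absurd hy (hσ.swap_notMem_colPairsByLabel hx)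
    · obtain ⟨rfl, rfl, rfl⟩ := heq
      exact absurd hy (hσ.swap_notMem_colPairsByLabel hx)
    · rw [heq.1, heq.2.1, heq.2.2]
  · rintro ⟨r₁, c, r₂⟩ ⟨h₁, hlt⟩
    rcases hσ.mem_colPairsByLabel_or_swap h₁ (mem_cells_of_row_le hL h₁ hlt.le) hlt.ne' with
      hx | hx
    · exact ⟨_, hx, if_pos hlt⟩
    · exact ⟨_, hx, by simp [hlt.not_gt]⟩

lemma ncard_colPairsByRow (L : List ℕ) : (colPairsByRow L).ncard = dimB L := by
  have hfin : colPairsByRow L = ↑((Finset.range L.length).biUnion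
      fun r => {r} ×ˢ (Finset.range (L.getD r 0) ×ˢ Finset.range r)) := by
    ext ⟨r, c, r'⟩
    simp only [colPairsByRow, cells, mem_ofPred_eq, Finset.coe_biUnion, Finset.coe_range,
      mem_iUnion, Finset.coe_product, Finset.coe_singleton, mem_prod, mem_singleton_iff, mem_Iio,
      exists_prop]
    constructor
    · rintro ⟨⟨hr, hc⟩, hr'⟩
      exact ⟨r, hr, rfl, hc, hr'⟩
    · rintro ⟨r, hr, rfl, hc, hr'⟩
      exact ⟨⟨hr, hc⟩, hr'⟩
  rw [hfin, ncard_coe_finset, Finset.card_biUnion]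
  · simp [dimB, mul_comm]
  · intro r _ r' _ hne
    simp only [Function.onFun, Finset.disjoint_left, Finset.mem_product, Finset.mem_singleton]
    rintro x ⟨rfl, -⟩ ⟨h, -⟩
    exact hne h

lemma IsRST.pairsCount_eq_dimB (hσ : IsRST L n σ) (hL : L.Pairwise (· ≥ ·)) :
    pairsCount n σ = dimB L := by
  rw [pairsCount, hσ.springerPairs_bijOn.ncard_eq, (hσ.1.colPairsByLabel_bijOn hL).ncard_eq,
    ncard_colPairsByRow]

end PairsCount

section Blocks

variable {L : List ℕ} {n d : ℕ} {σ : ℕ → ℕ × ℕ}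

lemma mul_add_eq_mul_add_iff {q q' t t' : ℕ} (ht : t < d) (ht' : t' < d) :
    d * q + t = d * q' + t' ↔ q = q' ∧ t = t' := by
  refine ⟨fun h => ?_, by rintro ⟨rfl, rfl⟩; rfl⟩
  have hd : 0 < d := by omega
  obtain ⟨hdiv, hmod⟩ := (Nat.div_mod_unique hd).2 ⟨(add_comm _ _).trans h, ht⟩
  rw [Nat.mul_add_div hd, Nat.div_eq_of_lt ht', add_zero] at hdiv
  rw [Nat.mul_add_mod, Nat.mod_eq_of_lt ht'] at hmod
  exact ⟨hdiv.symm, hmod.symm⟩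

lemma mul_add_lt_of_lt_div {q t : ℕ} (hq : q < n / d) (ht : t < d) : d * q + t < n :=
  calc d * q + t < d * (q + 1) := by rw [Nat.mul_succ]; omega
    _ ≤ d * (n / d) := Nat.mul_le_mul_left d hq
    _ ≤ n := Nat.mul_div_le n d

lemma exists_eq_mul_add_of_mem_Icc (hd : 0 < d) (hdn : d ∣ n) {i : ℕ} (hi : i ∈ Icc 1 n) :
    ∃ q < n / d, ∃ t < d, i = d * q + t + 1 := by
  obtain ⟨hi1, hin⟩ := hi
  exact ⟨(i - 1) / d, Nat.div_lt_div_of_lt_of_dvd hdn (by omega), (i - 1) % d, Nat.mod_lt _ hd,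
    by rw [Nat.div_add_mod]; omega⟩

lemma TabDivisor.pos_mul_add (hdiv : TabDivisor n d σ) {q t : ℕ} (hq : q < n / d)
    (ht : t < d) : σ (d * q + t + 1) = ((σ (d * q + 1)).1, (σ (d * q + 1)).2 + t) := by
  induction t with
  | zero => rfl
  | succ t ih =>
    have hndvd : ¬ d ∣ d * q + t + 1 := by
      rw [add_assoc, Nat.dvd_add_right (dvd_mul_right d q)]
      exact Nat.not_dvd_of_pos_of_lt t.succ_pos ht
    rw [← add_assoc, add_right_comm, hdiv.2 _ (by omega)
      (by have := mul_add_lt_of_lt_div hq ht; omega) hndvd, ih (by omega)]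
    rfl

/-- The box left of a block start closes a block, since otherwise the tableau would continue
that block into the block start. -/
lemma IsTab.dvd_col_block_start (hσ : IsTab L n σ) (hdiv : TabDivisor n d σ) {q : ℕ}
    (hq : q < n / d) : d ∣ (σ (d * q + 1)).2 := by
  have hd : 0 < d := Nat.pos_of_ne_zero fun h => by simp [h] at hq
  induction hc : (σ (d * q + 1)).2 using Nat.strong_induction_on generalizing q with
  | _ c ih =>
  have hs : d * q + 1 ∈ Icc 1 n := ⟨by omega, mul_add_lt_of_lt_div hq hd⟩
  rcases c with _ | c
  · exact dvd_zero d
  obtain ⟨x, hx, hσx⟩ := hσ.exists_pos_eq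
    (mem_cells_of_col_le (hσ.pos_mem_cells hs) (c := c) (by omega))
  obtain ⟨p, hp, t, ht, rfl⟩ := exists_eq_mul_add_of_mem_Icc hd hdiv.1 hx
  have hσx' := hdiv.pos_mul_add hp ht
  by_cases hlast : t + 1 = d
  · have hcol : c + 1 = (σ (d * p + 1)).2 + d := by
      have := congrArg Prod.snd (hσx.symm.trans hσx')
      dsimp only at this
      omega
    rw [hcol]
    exact (ih _ (by omega) hp rfl).add (dvd_refl d)
  · have hnext := hdiv.pos_mul_add hp (t := t + 1) (by omega)
    have hrow := congrArg Prod.fst (hσx'.symm.trans hσx)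
    have hcol := congrArg Prod.snd (hσx'.symm.trans hσx)
    dsimp only at hrow hcol
    have hx1 : d * p + (t + 1) + 1 ∈ Icc 1 n :=
      ⟨by omega, by have := mul_add_lt_of_lt_div hp (t := t + 1) (by omega); omega⟩
    have heq := hσ.1 hx1 hs (hnext.trans (Prod.ext hrow (by dsimp only; omega)))
    have := (mul_add_eq_mul_add_iff (q := p) (q' := q) (t := t + 1) (t' := 0) (by omega) hd).1
      (by omega)
    omega

lemma IsTab.pos_mul_add (hσ : IsTab L n σ) (hdiv : TabDivisor n d σ) {q t : ℕ}
    (hq : q < n / d) (ht : t < d) :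
    σ (d * q + t + 1) = ((quotTab d σ (q + 1)).1, d * (quotTab d σ (q + 1)).2 + t) := by
  obtain ⟨k, hk⟩ := hσ.dvd_col_block_start hdiv hq
  have hend := hdiv.pos_mul_add hq (t := d - 1) (by omega)
  have hq1 : d * (q + 1) = d * q + (d - 1) + 1 := by rw [Nat.mul_succ]; omega
  have hquot : quotTab d σ (q + 1) = ((σ (d * q + 1)).1, k) := by
    rw [quotTab, hq1, hend, hk, add_assoc, Nat.sub_add_cancel (by omega : 1 ≤ d),
      ← Nat.mul_succ, Nat.mul_div_cancel_left _ (by omega)]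
    rfl
  rw [hdiv.pos_mul_add hq ht, hquot, hk]

end Blocks

section Quotient

variable {L : List ℕ} {n d : ℕ} {σ : ℕ → ℕ × ℕ}

lemma exists_eq_succ_of_mem_Icc {m k : ℕ} (hm : m ∈ Icc 1 k) : ∃ q < k, m = q + 1 := by
  obtain ⟨h1, hk⟩ := hm
  exact ⟨m - 1, by omega, by omega⟩

lemma getD_map_div (L : List ℕ) (d r : ℕ) : (L.map (· / d)).getD r 0 = L.getD r 0 / d := by
  simpa using List.getD_map L 0 (n := r) (· / d)

lemma mem_cells_map_div_iff (hd : 0 < d) {r k : ℕ} :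
    (r, k) ∈ cells (L.map (· / d)) ↔ (r, d * k + (d - 1)) ∈ cells L := by
  have hk : k < L.getD r 0 / d ↔ d * k + (d - 1) < L.getD r 0 := by
    rw [Nat.lt_iff_add_one_le, Nat.le_div_iff_mul_le hd, Nat.succ_mul, mul_comm]
    omega
  show r < (L.map (· / d)).length ∧ k < (L.map (· / d)).getD r 0 ↔ _
  rw [List.length_map, getD_map_div, hk]
  rfl

lemma quotTab_eq_zero_of_notMem (hσ : IsTab L n σ) (hd : 0 < d) {m : ℕ}
    (hm : m ∉ Icc 1 (n / d)) : quotTab d σ m = (0, 0) := by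
  have hdm : d * m ∉ Icc 1 n := by
    rintro ⟨h1, hn⟩
    exact hm ⟨Nat.pos_of_mul_pos_left h1, (Nat.le_div_iff_mul_le hd).2 (by rwa [mul_comm])⟩
  rw [quotTab, hσ.2.2 _ hdm, Nat.sub_eq_zero_of_le (Nat.div_le_self 1 d)]

lemma IsTab.quotTab_injOn (hσ : IsTab L n σ) (hdiv : TabDivisor n d σ) (hd : 0 < d) :
    InjOn (quotTab d σ) (Icc 1 (n / d)) := by
  intro m₁ hm₁ m₂ hm₂ heq
  obtain ⟨q₁, hq₁, rfl⟩ := exists_eq_succ_of_mem_Icc hm₁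
  obtain ⟨q₂, hq₂, rfl⟩ := exists_eq_succ_of_mem_Icc hm₂
  have hpos := hσ.pos_mul_add hdiv hq₁ hd
  rw [heq, ← hσ.pos_mul_add hdiv hq₂ hd] at hpos
  have := hσ.1 ⟨by omega, mul_add_lt_of_lt_div hq₁ hd⟩ ⟨by omega, mul_add_lt_of_lt_div hq₂ hd⟩
    hpos
  rw [Nat.eq_of_mul_eq_mul_left hd (by omega : d * q₁ = d * q₂)]

lemma IsTab.image_quotTab (hσ : IsTab L n σ) (hdiv : TabDivisor n d σ) (hd : 0 < d) :
    quotTab d σ '' Icc 1 (n / d) = cells (L.map (· / d)) := by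
  ext ⟨r, k⟩
  rw [mem_cells_map_div_iff hd]
  constructor
  · rintro ⟨m, hm, hquot⟩
    obtain ⟨q, hq, rfl⟩ := exists_eq_succ_of_mem_Icc hm
    have hend := hσ.pos_mul_add hdiv hq (t := d - 1) (by omega)
    rw [hquot] at hend
    rw [← hend]
    exact hσ.pos_mem_cells ⟨by omega, mul_add_lt_of_lt_div hq (by omega)⟩
  · intro hcell
    obtain ⟨x, hx, hσx⟩ := hσ.exists_pos_eq hcell
    obtain ⟨q, hq, t, ht, rfl⟩ := exists_eq_mul_add_of_mem_Icc hd hdiv.1 hx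
    rw [hσ.pos_mul_add hdiv hq ht, Prod.mk.injEq, mul_add_eq_mul_add_iff ht (by omega)] at hσx
    exact ⟨q + 1, ⟨by omega, hq⟩, Prod.ext hσx.1 hσx.2.1⟩

lemma IsRST.rowStrict_quotTab (hσ : IsRST L n σ) (hdiv : TabDivisor n d σ) (hd : 0 < d) :
    RowStrict (n / d) (quotTab d σ) := by
  intro m' m hm' hm hrow hcol
  obtain ⟨q', hq', rfl⟩ := exists_eq_succ_of_mem_Icc hm'
  obtain ⟨q, hq, rfl⟩ := exists_eq_succ_of_mem_Icc hm
  have hend := hσ.1.pos_mul_add hdiv hq' (t := d - 1) (by omega)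
  have hstart := hσ.1.pos_mul_add hdiv hq hd
  have hlt := hσ.2 (d * q' + (d - 1) + 1) (d * q + 0 + 1)
    ⟨by omega, mul_add_lt_of_lt_div hq' (by omega)⟩ ⟨by omega, mul_add_lt_of_lt_div hq hd⟩
    (by rw [hend, hstart, hrow]) (by rw [hend, hstart, hcol, Nat.mul_succ]; dsimp only; omega)
  have : d * (q' + 1) ≤ d * q := by rw [Nat.mul_succ]; omega
  have := Nat.le_of_mul_le_mul_left this hd
  omega

lemma IsRST.quotTab (hσ : IsRST L n σ) (hdiv : TabDivisor n d σ) (hd : 0 < d) :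
    IsRST (L.map (· / d)) (n / d) (quotTab d σ) :=
  ⟨⟨hσ.1.quotTab_injOn hdiv hd, hσ.1.image_quotTab hdiv hd,
    fun _ hm => quotTab_eq_zero_of_notMem hσ.1 hd hm⟩, hσ.rowStrict_quotTab hdiv hd⟩

end Quotient

section NonInversions

variable {L : List ℕ} {n d : ℕ} {σ : ℕ → ℕ × ℕ}

def SpringerNonInv (n : ℕ) (pos : ℕ → ℕ × ℕ) (i j : ℕ) : Prop :=
  SpringerPair n pos i j ∧ (pos i).2 = (pos j).2 ∧ (pos i).1 ≤ (pos j).1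

lemma pairsCount_eq_invCount_add (n : ℕ) (pos : ℕ → ℕ × ℕ) :
    pairsCount n pos = invCount n pos + {p : ℕ × ℕ | SpringerNonInv n pos p.1 p.2}.ncard := by
  have hfin : {p : ℕ × ℕ | SpringerPair n pos p.1 p.2}.Finite :=
    (finite_Iic (n, n)).subset fun p (hp : SpringerPair n pos p.1 p.2) =>
      ⟨hp.fst_mem_Icc.2, hp.snd_mem_Icc.2⟩
  have hsdiff : {p : ℕ × ℕ | SpringerNonInv n pos p.1 p.2} =
      {p : ℕ × ℕ | SpringerPair n pos p.1 p.2} \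
        {p : ℕ × ℕ | SpringerInv n pos p.1 p.2} := by
    ext p
    simp only [SpringerNonInv, SpringerInv, mem_ofPred_eq, mem_sdiff, not_and, Classical.not_imp,
      not_lt]
    tauto
  have hsub : {p : ℕ × ℕ | SpringerInv n pos p.1 p.2} ⊆ {p | SpringerPair n pos p.1 p.2} :=
    fun _ hp => hp.1
  rw [hsdiff, add_comm, invCount, pairsCount, ncard_sdiff_add_ncard_of_subset hsub hfin]

/-- If `j` did not end its block, the label `j + 1` would sit right of `j`, and the Springer
condition would force `i < j + 1`. -/
lemma IsTab.exists_eq_mul_of_springerNonInv (hσ : IsTab L n σ) (hdiv : TabDivisor n d σ)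
    (hd : 0 < d) {i j : ℕ} (h : SpringerNonInv n σ i j) :
    ∃ Q < n / d, ∃ q < n / d, i = d * (Q + 1) ∧ j = d * (q + 1) := by
  obtain ⟨hpair, hcol, -⟩ := h
  obtain ⟨Q, hQ, T, hT, rfl⟩ := exists_eq_mul_add_of_mem_Icc hd hdiv.1 hpair.fst_mem_Icc
  obtain ⟨q, hq, t, ht, rfl⟩ := exists_eq_mul_add_of_mem_Icc hd hdiv.1 hpair.snd_mem_Icc
  rw [hσ.pos_mul_add hdiv hQ hT, hσ.pos_mul_add hdiv hq ht] at hcol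
  obtain ⟨-, rfl⟩ := (mul_add_eq_mul_add_iff hT ht).1 hcol
  obtain rfl : T = d - 1 := by
    by_contra hT'
    have hright := hpair.2.2.2.2 (d * q + (T + 1) + 1)
      ⟨by omega, mul_add_lt_of_lt_div hq (by omega)⟩
      (by rw [hσ.pos_mul_add hdiv hq (by omega), hσ.pos_mul_add hdiv hq hT]; rfl)
    have := hpair.2.1
    omega
  exact ⟨Q, hQ, q, hq, by rw [Nat.mul_succ]; omega, by rw [Nat.mul_succ]; omega⟩

lemma IsTab.forall_lt_of_pos_eq_iff (hσ : IsTab L n σ) (hdiv : TabDivisor n d σ) (hd : 0 < d)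
    {ρ κ N : ℕ} :
    (∀ x ∈ Icc 1 n, σ x = (ρ, d * κ) → d * N < x) ↔
      ∀ y ∈ Icc 1 (n / d), quotTab d σ y = (ρ, κ) → N < y := by
  constructor
  · intro h y hy hquot
    obtain ⟨p, hp, rfl⟩ := exists_eq_succ_of_mem_Icc hy
    have := h (d * p + 0 + 1) ⟨by omega, mul_add_lt_of_lt_div hp hd⟩
      (by rw [hσ.pos_mul_add hdiv hp hd, hquot]; rfl)
    have : N ≤ p := Nat.le_of_mul_le_mul_left (by omega) hd
    omega
  · intro h x hx hσx
    obtain ⟨p, hp, t, ht, rfl⟩ := exists_eq_mul_add_of_mem_Icc hd hdiv.1 hx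
    rw [hσ.pos_mul_add hdiv hp ht, Prod.mk.injEq, ← add_zero (d * κ),
      mul_add_eq_mul_add_iff ht hd] at hσx
    obtain ⟨hrow, hcol, rfl⟩ := hσx
    have := h (p + 1) ⟨by omega, hp⟩ (Prod.ext hrow hcol)
    have : d * N ≤ d * p := Nat.mul_le_mul_left d (by omega)
    omega

lemma IsTab.springerNonInv_mul_iff (hσ : IsTab L n σ) (hdiv : TabDivisor n d σ) (hd : 0 < d)
    {Q q : ℕ} (hQ : Q < n / d) (hq : q < n / d) :
    SpringerNonInv n σ (d * (Q + 1)) (d * (q + 1)) ↔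
      SpringerNonInv (n / d) (quotTab d σ) (Q + 1) (q + 1) := by
  have hend : ∀ p < n / d,
      σ (d * (p + 1)) = ((quotTab d σ (p + 1)).1, d * (quotTab d σ (p + 1)).2 + (d - 1)) := by
    intro p hp
    rw [show d * (p + 1) = d * p + (d - 1) + 1 by rw [Nat.mul_succ]; omega]
    exact hσ.pos_mul_add hdiv hp (by omega)
  rcases hQuot : quotTab d σ (Q + 1) with ⟨R, K⟩
  rcases hquot : quotTab d σ (q + 1) with ⟨r, k⟩
  have hσQ := hend Q hQ
  have hσq := hend q hq
  rw [hQuot] at hσQ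
  rw [hquot] at hσq
  have hright : d * k + (d - 1) + 1 = d * (k + 1) := by rw [Nat.mul_succ]; omega
  have hcol : d * K + (d - 1) = d * k + (d - 1) ↔ K = k := by
    rw [add_left_inj, Nat.mul_left_cancel_iff hd]
  have hcol_le : d * K + (d - 1) ≤ d * k + (d - 1) ↔ K ≤ k := by
    rw [add_le_add_iff_right, Nat.mul_le_mul_left_iff hd]
  have hlt : d * (q + 1) < d * (Q + 1) ↔ q + 1 < Q + 1 := Nat.mul_lt_mul_left hd
  have hpos : 1 ≤ d * (q + 1) := Nat.mul_pos hd q.succ_pos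
  have hQn : d * (Q + 1) ≤ n := by
    have := mul_add_lt_of_lt_div hQ (t := d - 1) (by omega)
    rw [Nat.mul_succ]; omega
  simp only [SpringerNonInv, SpringerPair, hσQ, hσq, hQuot, hquot, hright,
    hσ.forall_lt_of_pos_eq_iff hdiv hd, hcol, hcol_le, hlt, hpos, hQn, Nat.succ_le_of_lt hQ,
    le_add_iff_nonneg_left, zero_le, true_and]

lemma IsTab.springerNonInv_eq_image (hσ : IsTab L n σ) (hdiv : TabDivisor n d σ) (hd : 0 < d) :
    {p : ℕ × ℕ | SpringerNonInv n σ p.1 p.2} =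
      Prod.map (d * ·) (d * ·) ''
        {p : ℕ × ℕ | SpringerNonInv (n / d) (quotTab d σ) p.1 p.2} := by
  ext ⟨i, j⟩
  constructor
  · intro h
    obtain ⟨Q, hQ, q, hq, rfl, rfl⟩ := hσ.exists_eq_mul_of_springerNonInv hdiv hd h
    exact ⟨(Q + 1, q + 1), (hσ.springerNonInv_mul_iff hdiv hd hQ hq).1 h, rfl⟩
  · rintro ⟨⟨M, m⟩, h, heq⟩
    obtain ⟨Q, hQ, rfl⟩ := exists_eq_succ_of_mem_Icc h.1.fst_mem_Icc
    obtain ⟨q, hq, rfl⟩ := exists_eq_succ_of_mem_Icc h.1.snd_mem_Icc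
    rw [← heq]
    exact (hσ.springerNonInv_mul_iff hdiv hd hQ hq).2 h

lemma IsTab.ncard_springerNonInv_quotTab (hσ : IsTab L n σ) (hdiv : TabDivisor n d σ)
    (hd : 0 < d) :
    {p : ℕ × ℕ | SpringerNonInv (n / d) (quotTab d σ) p.1 p.2}.ncard =
      {p : ℕ × ℕ | SpringerNonInv n σ p.1 p.2}.ncard := by
  rw [hσ.springerNonInv_eq_image hdiv hd, ncard_image_of_injective _
    ((mul_right_injective₀ hd.ne').prodMap (mul_right_injective₀ hd.ne'))]

end NonInversions

lemma dimB_map_div_le (L : List ℕ) (d : ℕ) : dimB (L.map (· / d)) ≤ dimB L := by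
  unfold dimB
  rw [List.length_map]
  refine Finset.sum_le_sum fun i _ => Nat.mul_le_mul_left i ?_
  rw [getD_map_div]
  exact Nat.div_le_self _ d

/-- Let `σ` be a row-strict tableau of shape `λ ⊢ n` and `d` a divisor of `σ`.  Then
`|inv(σ)| = D_{λ,d} + |inv(σ/d)|`, where
`D_{λ,d} = ((d−1)/d)·Σ_i (i−1)λ_i = Σ_i (i−1)λ_i − Σ_i (i−1)(λ_i/d)`. -/
theorem stmt11 (L : List ℕ) (n d : ℕ) (hL : IsPartition L n) (σ : ℕ → ℕ × ℕ)
    (hσ : IsRST L n σ) (hd : 0 < d) (hdiv : TabDivisor n d σ) :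
    invCount n σ
      = (dimB L - dimB (L.map (· / d))) + invCount (n / d) (quotTab d σ) := by
  have hsorted := hL.2.1
  have hpairs := pairsCount_eq_invCount_add n σ
  have hpairs_quot := pairsCount_eq_invCount_add (n / d) (quotTab d σ)
  rw [hσ.pairsCount_eq_dimB hsorted] at hpairs
  rw [(hσ.quotTab hdiv hd).pairsCount_eq_dimB
      (hsorted.map _ fun _ _ => Nat.div_le_div_right),
    hσ.1.ncard_springerNonInv_quotTab hdiv hd] at hpairs_quot
  have := dimB_map_div_le L d
  omega
end
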